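/- arXiv:2311.13040 — 4 statements merged into one kernel-verified Lean document; each statement's English description precedes it below -/
import Mathlib

section
/- Let τ = (√5−1)/2 and γ ∈ ℝ with γ not congruent to τn (mod 1) for any integer n. Define a_m = 1 if the fractional part of τm+γ lies in [1−τ, 1) and a_m = 0 otherwise. If S ⊆ ℤ is such that {τn mod 1 : n ∈ S} is dense in ℝ/ℤ, then the restriction (a_n)_{n∈S} uniquely determines γ mod 1. That is, if γ' satisfies the same hypotheses and produces the same values a'_n = a_n for all n ∈ S, then γ ≡ γ' (mod 1). -/
lemma key_mismatch (τ γ γ' : ℝ) (hτ1 : 1/2 < τ) (hτ2 : τ < 1)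
    (hδ0 : 0 < Int.fract (γ - γ')) (hδτ : Int.fract (γ - γ') < τ) :
    ∃ x ε : ℝ, 0 < ε ∧ ∀ y : ℝ, |y - x| < ε →
      ¬ (Int.fract (y + γ) ∈ Set.Ico (1-τ) 1 ↔ Int.fract (y + γ') ∈ Set.Ico (1-τ) 1) := by
  set δ := Int.fract (γ - γ') with hδdef
  have hK : γ - γ' = δ + (⌊γ - γ'⌋ : ℝ) := by
    rw [hδdef, Int.fract]; ring
  set K : ℤ := ⌊γ - γ'⌋
  have hδ1 : δ < 1 := Int.fract_lt_one _
  rcases le_or_gt δ (1 - τ) with hc | hc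
  · -- case δ ≤ 1 - τ
    set s := min δ τ / 2 with hs
    have hsd : s ≤ δ / 2 := by rw [hs]; have := min_le_left δ τ; linarith
    have hst : s ≤ τ / 2 := by rw [hs]; have := min_le_right δ τ; linarith
    have hs0 : 0 < s := by rw [hs]; have := lt_min hδ0 (by linarith : (0:ℝ) < τ); linarith
    refine ⟨1 - s - γ', s/2, by linarith, fun y hy => ?_⟩
    set η := y - (1 - s - γ') with hηdef
    have hη := abs_lt.mp hy
    have e1 : Int.fract (y + γ') = 1 - s + η := by
      have hy' : y + γ' = 1 - s + η := by rw [hηdef]; ring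
      rw [hy']; exact Int.fract_eq_self.mpr ⟨by linarith, by linarith⟩
    have e2 : Int.fract (y + γ) = δ - s + η := by
      have hy2 : y + γ = (δ - s + η) + ((1 + K : ℤ) : ℝ) := by
        push_cast; rw [hηdef]; linarith
      rw [hy2, Int.fract_add_intCast]
      exact Int.fract_eq_self.mpr ⟨by linarith, by linarith⟩
    rw [e1, e2]
    intro hiff
    have h2 : (1 - s + η) ∈ Set.Ico (1-τ) 1 := ⟨by linarith, by linarith⟩
    have h3 := (hiff.mpr h2).1
    linarith
  · -- case 1 - τ < δ (< τ)
    refine ⟨(1-τ)/2 - γ', (1-τ)/4, by linarith, fun y hy => ?_⟩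
    set η := y - ((1-τ)/2 - γ') with hηdef
    have hη := abs_lt.mp hy
    have e1 : Int.fract (y + γ') = (1-τ)/2 + η := by
      have hy' : y + γ' = (1-τ)/2 + η := by rw [hηdef]; ring
      rw [hy']; exact Int.fract_eq_self.mpr ⟨by linarith, by linarith⟩
    have e2 : Int.fract (y + γ) = (1-τ)/2 + δ + η := by
      have hy2 : y + γ = ((1-τ)/2 + δ + η) + ((K : ℤ) : ℝ) := by
        push_cast; rw [hηdef]; linarith
      rw [hy2, Int.fract_add_intCast]
      exact Int.fract_eq_self.mpr ⟨by linarith, by linarith⟩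
    rw [e1, e2]
    intro hiff
    have h2 : ((1-τ)/2 + δ + η) ∈ Set.Ico (1-τ) 1 := ⟨by linarith, by linarith⟩
    have h3 := (hiff.mp h2).1
    linarith


/-- A Sturmian coding of the irrational rotation by τ = (√5−1)/2,
restricted to a set S whose rotation orbit is dense in ℝ/ℤ, determines γ mod 1. -/
theorem sturmian_determines_offset
    (τ : ℝ) (hτ : τ = (Real.sqrt 5 - 1) / 2)
    (γ γ' : ℝ)
    (hγ : ∀ n m : ℤ, γ ≠ τ * n + m)
    (hγ' : ∀ n m : ℤ, γ' ≠ τ * n + m)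
    (a a' : ℤ → ℕ)
    (ha : ∀ m : ℤ, a m = if Int.fract (τ * m + γ) ∈ Set.Ico (1 - τ) 1 then 1 else 0)
    (ha' : ∀ m : ℤ, a' m = if Int.fract (τ * m + γ') ∈ Set.Ico (1 - τ) 1 then 1 else 0)
    (S : Set ℤ)
    (hS : Dense ((fun n : ℤ => ((τ * n : ℝ) : AddCircle (1 : ℝ))) '' S))
    (heq : ∀ n ∈ S, a n = a' n) :
    ((γ : ℝ) : AddCircle (1 : ℝ)) = ((γ' : ℝ) : AddCircle (1 : ℝ)) := by
  by_contra hne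
  have h5a : (2:ℝ) < Real.sqrt 5 := by
    nlinarith [Real.sq_sqrt (show (0:ℝ) ≤ 5 by norm_num), Real.sqrt_nonneg 5]
  have h5b : Real.sqrt 5 < 3 := by
    nlinarith [Real.sq_sqrt (show (0:ℝ) ≤ 5 by norm_num), Real.sqrt_nonneg 5]
  have hτ1 : 1/2 < τ := by rw [hτ]; linarith
  have hτ2 : τ < 1 := by rw [hτ]; linarith
  have hfr : Int.fract (γ - γ') ≠ 0 := by
    intro h0
    apply hne
    have hγγ' : γ = γ' + (⌊γ - γ'⌋ : ℝ) := by
      have := Int.fract_add_floor (γ - γ')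
      linarith [h0 ▸ this]
    rw [hγγ', AddCircle.coe_add,
      show (((⌊γ - γ'⌋ : ℝ)) : AddCircle (1:ℝ)) = 0 from
        (AddCircle.coe_eq_zero_iff (1:ℝ)).mpr ⟨⌊γ - γ'⌋, by simp⟩, add_zero]
  have hδ0 : 0 < Int.fract (γ - γ') := lt_of_le_of_ne (Int.fract_nonneg _) (Ne.symm hfr)
  have hδ1 : Int.fract (γ - γ') < 1 := Int.fract_lt_one _
  have hmis : ∃ x ε : ℝ, 0 < ε ∧ ∀ y : ℝ, |y - x| < ε →
      ¬ (Int.fract (y + γ) ∈ Set.Ico (1-τ) 1 ↔ Int.fract (y + γ') ∈ Set.Ico (1-τ) 1) := by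
    rcases lt_or_ge (Int.fract (γ - γ')) τ with h | h
    · exact key_mismatch τ γ γ' hτ1 hτ2 hδ0 h
    · have hfneg : Int.fract (γ' - γ) = 1 - Int.fract (γ - γ') := by
        rw [show γ' - γ = -(γ - γ') by ring, Int.fract_neg hfr]
      obtain ⟨x, ε, hε, hm⟩ := key_mismatch τ γ' γ hτ1 hτ2
        (by rw [hfneg]; linarith) (by rw [hfneg]; linarith)
      exact ⟨x, ε, hε, fun y hy hiff => hm y hy hiff.symm⟩
  obtain ⟨x, ε, hε, hm⟩ := hmis
  have hU : IsOpen ((fun r : ℝ => (r : AddCircle (1:ℝ))) '' Set.Ioo (x-ε) (x+ε)) :=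
    QuotientAddGroup.isOpenMap_coe _ isOpen_Ioo
  have hxmem : ((x : ℝ) : AddCircle (1:ℝ)) ∈
      (fun r : ℝ => (r : AddCircle (1:ℝ))) '' Set.Ioo (x-ε) (x+ε) :=
    ⟨x, ⟨by linarith, by linarith⟩, rfl⟩
  obtain ⟨z, hz1, hz2⟩ := hS.inter_open_nonempty _ hU ⟨_, hxmem⟩
  obtain ⟨y, hy, hyz⟩ := hz1
  obtain ⟨n, hn, hzn⟩ := hz2
  have hcoe : ((τ * n - y : ℝ) : AddCircle (1:ℝ)) = 0 := by
    rw [AddCircle.coe_sub]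
    rw [show ((τ * (n:ℝ) : ℝ) : AddCircle (1:ℝ)) = z from hzn,
      show ((y : ℝ) : AddCircle (1:ℝ)) = z from hyz, sub_self]
  obtain ⟨k, hk⟩ := (AddCircle.coe_eq_zero_iff (1:ℝ)).mp hcoe
  have hk' : (k : ℝ) = τ * n - y := by simpa using hk
  apply hm y (abs_lt.mpr ⟨by linarith [hy.1], by linarith [hy.2]⟩)
  have e1 : Int.fract (τ * n + γ) = Int.fract (y + γ) := by
    rw [show τ * (n:ℝ) + γ = (y + γ) + (k:ℝ) by linarith, Int.fract_add_intCast]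
  have e2 : Int.fract (τ * n + γ') = Int.fract (y + γ') := by
    rw [show τ * (n:ℝ) + γ' = (y + γ') + (k:ℝ) by linarith, Int.fract_add_intCast]
  have hA := heq n hn
  rw [ha n, ha' n, e1, e2] at hA
  by_cases hP : Int.fract (y + γ) ∈ Set.Ico (1-τ) 1 <;>
    by_cases hQ : Int.fract (y + γ') ∈ Set.Ico (1-τ) 1 <;>
    simp [hP, hQ] at hA ⊢
end

section
/- Let H = H_K ⊗ H_{K^c} be a tensor product of finite-dimensional Hilbert spaces and let C ⊆ H be a subspace. Suppose that for all unit vectors ξ₁, ξ₂ ∈ C with ⟨ξ₁|ξ₂⟩ = 0 we have Tr_{K^c}(|ξ₂⟩⟨ξ₁|) = 0. Then the partial trace Tr_{K^c}(|ξ⟩⟨ξ|) is the same operator ρ_K for every unit vector ξ ∈ C. -/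
open Matrix

/-- The partial trace over the second tensor factor, in matrix form. -/
noncomputable def ptrace {mK mKc : Type*} [Fintype mKc]
    (M : Matrix (mK × mKc) (mK × mKc) ℂ) : Matrix mK mK ℂ :=
  Matrix.of fun i j => ∑ k, M (i, k) (j, k)

lemma conj_dot {n : Type*} [Fintype n] (a b : n → ℂ) :
    (starRingEnd ℂ) (star a ⬝ᵥ b) = star b ⬝ᵥ a := by
  simp [dotProduct, map_sum, mul_comm]

lemma dot_self_real {n : Type*} [Fintype n] (w : n → ℂ) :
    star w ⬝ᵥ w = ((∑ i, Complex.normSq (w i) : ℝ) : ℂ) := by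
  simp [dotProduct, Complex.normSq_eq_conj_mul_self]

lemma ptrace_vmv_apply {mK mKc : Type*} [Fintype mKc]
    (ξ η : (mK × mKc) → ℂ) (i j : mK) :
    ptrace (vecMulVec η (star ξ)) i j = ∑ k, η (i, k) * (starRingEnd ℂ) (ξ (j, k)) := by
  simp [ptrace, vecMulVec, Complex.star_def]

/-- If the partial trace of |ξ₂⟩⟨ξ₁| vanishes for all orthogonal unit
vectors in the code space C, then the reduced state on K is the same for every
unit vector in C. -/
theorem erasure_condition_implies_indistinguishability
    {mK mKc : Type*} [Fintype mK] [Fintype mKc]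
    (C : Submodule ℂ ((mK × mKc) → ℂ))
    (h : ∀ ξ₁ ∈ C, ∀ ξ₂ ∈ C,
      star ξ₁ ⬝ᵥ ξ₁ = 1 → star ξ₂ ⬝ᵥ ξ₂ = 1 → star ξ₁ ⬝ᵥ ξ₂ = 0 →
      ptrace (vecMulVec ξ₂ (star ξ₁)) = 0) :
    ∃ ρK : Matrix mK mK ℂ, ∀ ξ ∈ C, star ξ ⬝ᵥ ξ = 1 →
      ptrace (vecMulVec ξ (star ξ)) = ρK := by
  classical
  by_cases hex : ∃ ξ₀ ∈ C, star ξ₀ ⬝ᵥ ξ₀ = 1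
  · obtain ⟨ξ₀, hξ₀C, hξ₀⟩ := hex
    refine ⟨ptrace (vecMulVec ξ₀ (star ξ₀)), fun η hηC hη => ?_⟩
    set c : ℂ := star ξ₀ ⬝ᵥ η with hc
    set w : (mK × mKc) → ℂ := η - c • ξ₀ with hwdef
    have hwC : w ∈ C := C.sub_mem hηC (C.smul_mem c hξ₀C)
    have hηw : η = w + c • ξ₀ := by simp [hwdef]
    have hξw : star ξ₀ ⬝ᵥ w = 0 := by
      simp [hwdef, dotProduct_sub, dotProduct_smul, hξ₀, ← hc]
    have hwξ : star w ⬝ᵥ ξ₀ = 0 := by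
      rw [← conj_dot ξ₀ w, hξw, map_zero]
    have hηξ : star η ⬝ᵥ ξ₀ = (starRingEnd ℂ) c := by
      rw [← conj_dot ξ₀ η, ← hc]
    have hww : star w ⬝ᵥ w = 1 - c * (starRingEnd ℂ) c := by
      have hsw : star w = star η - (starRingEnd ℂ) c • star ξ₀ := by
        simp [hwdef, star_sub, star_smul, Complex.star_def]
      rw [hsw, sub_dotProduct, smul_dotProduct, hξw, smul_zero, sub_zero,
        hwdef, dotProduct_sub, dotProduct_smul, hη, hηξ, smul_eq_mul]
    by_cases hw0 : w = 0
    · -- η = c • ξ₀ with |c| = 1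
      have hc1 : c * (starRingEnd ℂ) c = 1 := by
        have := hww
        rw [hw0] at this
        simp at this
        linear_combination this
      ext i j
      rw [ptrace_vmv_apply, ptrace_vmv_apply]
      have hη' : η = c • ξ₀ := by simpa [hw0] using hηw
      calc ∑ k, η (i, k) * (starRingEnd ℂ) (η (j, k))
          = ∑ k, (c * (starRingEnd ℂ) c) * (ξ₀ (i, k) * (starRingEnd ℂ) (ξ₀ (j, k))) := by
            refine Finset.sum_congr rfl fun k _ => ?_
            rw [hη']
            simp only [Pi.smul_apply, smul_eq_mul, _root_.map_mul]
            ring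
        _ = ∑ k, ξ₀ (i, k) * (starRingEnd ℂ) (ξ₀ (j, k)) := by
            simp [hc1]
    · -- w ≠ 0
      set T : ℝ := ∑ i, Complex.normSq (w i) with hT
      have hwT : star w ⬝ᵥ w = (T : ℂ) := dot_self_real w
      have hTpos : 0 < T := by
        obtain ⟨i, hi⟩ := Function.ne_iff.mp hw0
        exact Finset.sum_pos' (fun i _ => Complex.normSq_nonneg _)
          ⟨i, Finset.mem_univ i, by simpa [Complex.normSq_pos] using hi⟩
      set r : ℝ := Real.sqrt T with hrdef
      have hrpos : 0 < r := Real.sqrt_pos.mpr hTpos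
      have hrne : (r : ℂ) ≠ 0 := by exact_mod_cast hrpos.ne'
      have hr2 : (r : ℂ) * (r : ℂ) = (T : ℂ) := by
        rw [← Complex.ofReal_mul, Real.mul_self_sqrt hTpos.le]
      set ζ : (mK × mKc) → ℂ := ((r : ℂ))⁻¹ • w with hζdef
      have hζC : ζ ∈ C := C.smul_mem _ hwC
      have hwζ : w = (r : ℂ) • ζ := by
        rw [hζdef, smul_smul, mul_inv_cancel₀ hrne, one_smul]
      have hsζ : star ζ = ((r : ℂ))⁻¹ • star w := by
        simp [hζdef, star_smul, Complex.star_def, ← Complex.ofReal_inv]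
      have hζζ : star ζ ⬝ᵥ ζ = 1 := by
        rw [hsζ, hζdef, smul_dotProduct, dotProduct_smul, hwT, smul_eq_mul, smul_eq_mul,
          ← mul_assoc, ← mul_inv]
        rw [hr2]
        exact inv_mul_cancel₀ (by exact_mod_cast hTpos.ne')
      have hξζ : star ξ₀ ⬝ᵥ ζ = 0 := by
        rw [hζdef, dotProduct_smul, hξw, smul_zero]
      have hζξ : star ζ ⬝ᵥ ξ₀ = 0 := by
        rw [hsζ, smul_dotProduct, hwξ, smul_zero]
      have h1 := h ξ₀ hξ₀C ζ hζC hξ₀ hζζ hξζ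
      have h2 := h ζ hζC ξ₀ hξ₀C hζζ hξ₀ hζξ
      -- sum-level consequences
      have hS1 : ∀ i j, (∑ k, ζ (i, k) * (starRingEnd ℂ) (ξ₀ (j, k))) = 0 := by
        intro i j
        have := congrFun (congrFun h1 i) j
        rwa [ptrace_vmv_apply] at this
      have hS2 : ∀ i j, (∑ k, ξ₀ (i, k) * (starRingEnd ℂ) (ζ (j, k))) = 0 := by
        intro i j
        have := congrFun (congrFun h2 i) j
        rwa [ptrace_vmv_apply] at this
      -- the polarization step: ζ and ξ₀ orthogonal unit vectors
      set s : ℝ := Real.sqrt 2 with hsdef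
      have hs2 : (s : ℂ) * (s : ℂ) = 2 := by
        rw [← Complex.ofReal_mul, Real.mul_self_sqrt (by norm_num)]
        norm_num
      have hsne : (s : ℂ) ≠ 0 := by
        intro h0
        rw [h0] at hs2; simp at hs2
      set a : ℂ := ((s : ℂ))⁻¹ with hadef
      have ha2 : a * a = 1 / 2 := by
        rw [hadef, ← mul_inv, hs2]
        norm_num
      have hca : (starRingEnd ℂ) a = a := by
        rw [hadef, map_inv₀, Complex.conj_ofReal]
      set u : (mK × mKc) → ℂ := a • (ξ₀ + ζ) with hudef
      set v : (mK × mKc) → ℂ := a • (ξ₀ - ζ) with hvdef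
      have huC : u ∈ C := C.smul_mem _ (C.add_mem hξ₀C hζC)
      have hvC : v ∈ C := C.smul_mem _ (C.sub_mem hξ₀C hζC)
      have hsu : star u = a • (star ξ₀ + star ζ) := by
        simp [hudef, star_smul, star_add, Complex.star_def, hca]
      have hsv : star v = a • (star ξ₀ - star ζ) := by
        simp [hvdef, star_smul, star_sub, Complex.star_def, hca]
      have huu : star u ⬝ᵥ u = 1 := by
        rw [hsu, hudef, smul_dotProduct, dotProduct_smul, add_dotProduct,
          dotProduct_add, dotProduct_add, hξ₀, hζζ, hξζ, hζξ, smul_eq_mul, smul_eq_mul]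
        rw [show (1 : ℂ) + 0 + (0 + 1) = 2 by ring, ← mul_assoc, ha2]
        norm_num
      have hvv : star v ⬝ᵥ v = 1 := by
        rw [hsv, hvdef, smul_dotProduct, dotProduct_smul, sub_dotProduct,
          dotProduct_sub, dotProduct_sub, hξ₀, hζζ, hξζ, hζξ, smul_eq_mul, smul_eq_mul]
        rw [show (1 : ℂ) - 0 - (0 - 1) = 2 by ring, ← mul_assoc, ha2]
        norm_num
      have huv : star u ⬝ᵥ v = 0 := by
        rw [hsu, hvdef, smul_dotProduct, dotProduct_smul, add_dotProduct,
          dotProduct_sub, dotProduct_sub, hξ₀, hζζ, hξζ, hζξ, smul_eq_mul, smul_eq_mul]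
        ring
      have h3 := h u huC v hvC huu hvv huv
      have hSζζ : ∀ i j, (∑ k, ζ (i, k) * (starRingEnd ℂ) (ζ (j, k)))
          = ∑ k, ξ₀ (i, k) * (starRingEnd ℂ) (ξ₀ (j, k)) := by
        intro i j
        have h3' := congrFun (congrFun h3 i) j
        rw [ptrace_vmv_apply] at h3'
        have hexp : ∀ k : mKc, v (i, k) * (starRingEnd ℂ) (u (j, k))
            = (a * a) * (ξ₀ (i, k) * (starRingEnd ℂ) (ξ₀ (j, k))
              + ξ₀ (i, k) * (starRingEnd ℂ) (ζ (j, k))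
              - ζ (i, k) * (starRingEnd ℂ) (ξ₀ (j, k))
              - ζ (i, k) * (starRingEnd ℂ) (ζ (j, k))) := by
          intro k
          simp only [hudef, hvdef, Pi.smul_apply, Pi.add_apply, Pi.sub_apply,
            smul_eq_mul, _root_.map_mul, map_add, hca]
          ring
        rw [Finset.sum_congr rfl (fun k _ => hexp k), ← Finset.mul_sum] at h3'
        have hsum : (∑ k, (ξ₀ (i, k) * (starRingEnd ℂ) (ξ₀ (j, k))
              + ξ₀ (i, k) * (starRingEnd ℂ) (ζ (j, k))
              - ζ (i, k) * (starRingEnd ℂ) (ξ₀ (j, k))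
              - ζ (i, k) * (starRingEnd ℂ) (ζ (j, k)))) = 0 := by
          have hane : a * a ≠ 0 := by rw [ha2]; norm_num
          exact (mul_eq_zero.mp h3').resolve_left hane
        have := hsum
        rw [Finset.sum_sub_distrib, Finset.sum_sub_distrib, Finset.sum_add_distrib,
          hS1, hS2] at this
        linear_combination -this
      -- consequences for w
      have hcr : (starRingEnd ℂ) ((r : ℂ)) = (r : ℂ) := Complex.conj_ofReal r
      have hSwξ : ∀ i j, (∑ k, w (i, k) * (starRingEnd ℂ) (ξ₀ (j, k))) = 0 := by
        intro i j
        have : (∑ k, w (i, k) * (starRingEnd ℂ) (ξ₀ (j, k)))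
            = (r : ℂ) * ∑ k, ζ (i, k) * (starRingEnd ℂ) (ξ₀ (j, k)) := by
          rw [Finset.mul_sum]
          refine Finset.sum_congr rfl fun k _ => ?_
          rw [hwζ]; simp only [Pi.smul_apply, smul_eq_mul]; ring
        rw [this, hS1, mul_zero]
      have hSξw : ∀ i j, (∑ k, ξ₀ (i, k) * (starRingEnd ℂ) (w (j, k))) = 0 := by
        intro i j
        have : (∑ k, ξ₀ (i, k) * (starRingEnd ℂ) (w (j, k)))
            = (r : ℂ) * ∑ k, ξ₀ (i, k) * (starRingEnd ℂ) (ζ (j, k)) := by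
          rw [Finset.mul_sum]
          refine Finset.sum_congr rfl fun k _ => ?_
          rw [hwζ]; simp only [Pi.smul_apply, smul_eq_mul, _root_.map_mul, hcr]; ring
        rw [this, hS2, mul_zero]
      have hSww : ∀ i j, (∑ k, w (i, k) * (starRingEnd ℂ) (w (j, k)))
          = (T : ℂ) * ∑ k, ξ₀ (i, k) * (starRingEnd ℂ) (ξ₀ (j, k)) := by
        intro i j
        have e1 : (∑ k, w (i, k) * (starRingEnd ℂ) (w (j, k)))
            = ((r : ℂ) * (r : ℂ)) * ∑ k, ζ (i, k) * (starRingEnd ℂ) (ζ (j, k)) := by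
          rw [Finset.mul_sum]
          refine Finset.sum_congr rfl fun k _ => ?_
          rw [hwζ]; simp only [Pi.smul_apply, smul_eq_mul, _root_.map_mul, hcr]; ring
        rw [e1, hr2, hSζζ]
      have hTc : (T : ℂ) = 1 - c * (starRingEnd ℂ) c := by rw [← hwT, hww]
      -- final computation
      ext i j
      rw [ptrace_vmv_apply, ptrace_vmv_apply]
      have hexp : ∀ k : mKc, η (i, k) * (starRingEnd ℂ) (η (j, k))
          = w (i, k) * (starRingEnd ℂ) (w (j, k))
            + (starRingEnd ℂ) c * (w (i, k) * (starRingEnd ℂ) (ξ₀ (j, k)))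
            + c * (ξ₀ (i, k) * (starRingEnd ℂ) (w (j, k)))
            + (c * (starRingEnd ℂ) c) * (ξ₀ (i, k) * (starRingEnd ℂ) (ξ₀ (j, k))) := by
        intro k
        rw [hηw]
        simp only [Pi.add_apply, Pi.smul_apply, smul_eq_mul, map_add, _root_.map_mul]
        ring
      rw [Finset.sum_congr rfl (fun k _ => hexp k), Finset.sum_add_distrib,
        Finset.sum_add_distrib, Finset.sum_add_distrib, ← Finset.mul_sum, ← Finset.mul_sum,
        ← Finset.mul_sum, hSwξ, hSξw, hSww, hTc, mul_zero, mul_zero, add_zero, add_zero]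
      ring
  · exact ⟨0, fun ξ hξC h1 => absurd ⟨ξ, hξC, h1⟩ hex⟩
end

section
/- The induced substitution matrix M⁽²⁾ = [[0,0,1],[1,1,0],[1,1,0]] on the legal length-2 words (LL, LS, SL) of the Fibonacci substitution has a unique eigenvalue of maximal modulus, equal to φ = (1+√5)/2, and its eigenvector normalized to sum 1 equals (√5−2, (3−√5)/2, (3−√5)/2). Hence the asymptotic frequencies of the length-2 factors LL, LS, SL in the Fibonacci word are √5−2, (3−√5)/2, (3−√5)/2 respectively. -/
open Matrix Real

/-! The characteristic polynomial of `M⁽²⁾` is `z (z² - z - 1) = z (z - φ) (z - ψ)`, so its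
spectrum is `{0, φ, ψ}` and `|ψ| < 1 < φ`. Since `φ⁻¹ + φ⁻² = 1`, the vector `(φ⁻³, φ⁻², φ⁻²)`
is a `φ`-eigenvector whose entries sum to `1`, and `φ⁻³ = √5 - 2`, `φ⁻² = (3 - √5) / 2`. -/

section

open scoped goldenRatio

/-- The rows and columns are indexed by the legal words `LL, LS, SL`, in this order. -/
def fibInducedMatrix (R : Type*) [Zero R] [One R] : Matrix (Fin 3) (Fin 3) R :=
  !![0, 0, 1; 1, 1, 0; 1, 1, 0]

lemma smul_one_sub_fibInducedMatrix {R : Type*} [CommRing R] (z : R) :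
    z • (1 : Matrix (Fin 3) (Fin 3) R) - fibInducedMatrix R =
      !![z, 0, -1; -1, z - 1, 0; -1, -1, z] := by
  ext i j
  fin_cases i <;> fin_cases j <;> simp [fibInducedMatrix, one_apply]

lemma det_smul_one_sub_fibInducedMatrix {R : Type*} [CommRing R] (z : R) :
    (z • (1 : Matrix (Fin 3) (Fin 3) R) - fibInducedMatrix R).det = z * (z ^ 2 - z - 1) := by
  rw [smul_one_sub_fibInducedMatrix, det_fin_three]
  simp only [of_apply, cons_val', cons_val_zero, cons_val_one, cons_val_two, cons_val_fin_one,
    tail_cons, vecHead]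
  ring

lemma mem_spectrum_fibInducedMatrix_iff {K : Type*} [Field K] {μ : K} :
    μ ∈ spectrum K (fibInducedMatrix K) ↔ μ * (μ ^ 2 - μ - 1) = 0 := by
  rw [spectrum.mem_iff, isUnit_iff_isUnit_det, isUnit_iff_ne_zero, not_not,
    Algebra.algebraMap_eq_smul_one, det_smul_one_sub_fibInducedMatrix]

lemma goldenRatio_mem_spectrum_fibInducedMatrix : φ ∈ spectrum ℝ (fibInducedMatrix ℝ) := by
  rw [mem_spectrum_fibInducedMatrix_iff, goldenRatio_sq]
  ring

lemma eq_zero_or_eq_goldenRatio_or_eq_goldenConj_of_mem_spectrum_fibInducedMatrix {μ : ℂ}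
    (hμ : μ ∈ spectrum ℂ (fibInducedMatrix ℂ)) : μ = 0 ∨ μ = φ ∨ μ = ψ := by
  have hsum : (φ : ℂ) + ψ = 1 := by exact_mod_cast goldenRatio_add_goldenConj
  have hprod : (φ : ℂ) * ψ = -1 := by exact_mod_cast goldenRatio_mul_goldenConj
  have hfactor : μ * ((μ - φ) * (μ - ψ)) = 0 := by
    rw [mem_spectrum_fibInducedMatrix_iff] at hμ
    linear_combination hμ - μ ^ 2 * hsum + μ * hprod
  simpa only [mul_eq_zero, sub_eq_zero] using hfactor

lemma norm_lt_goldenRatio_of_mem_spectrum_fibInducedMatrix {μ : ℂ}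
    (hμ : μ ∈ spectrum ℂ (fibInducedMatrix ℂ)) (hne : μ ≠ φ) : ‖μ‖ < φ := by
  rcases eq_zero_or_eq_goldenRatio_or_eq_goldenConj_of_mem_spectrum_fibInducedMatrix hμ with
    rfl | rfl | rfl
  · simpa using goldenRatio_pos
  · exact absurd rfl hne
  · rw [Complex.norm_real, norm_eq_abs, abs_of_neg goldenConj_neg]
    linarith [neg_one_lt_goldenConj, one_lt_goldenRatio]

lemma fibInducedMatrix_mulVec {R : Type*} [Semiring R] (a b c : R) :
    fibInducedMatrix R *ᵥ ![a, b, c] = ![c, a + b, a + b] := by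
  ext i
  fin_cases i <;> simp [fibInducedMatrix, mulVec, dotProduct, Fin.sum_univ_three]

section

variable {K : Type*} [Field K] {x : K}

lemma fibInducedMatrix_mulVec_inv_pow (hx : x ^ 2 = x + 1) :
    fibInducedMatrix K *ᵥ ![x⁻¹ ^ 3, x⁻¹ ^ 2, x⁻¹ ^ 2] = x • ![x⁻¹ ^ 3, x⁻¹ ^ 2, x⁻¹ ^ 2] := by
  have hx0 : x ≠ 0 := by rintro rfl; simp at hx
  have hsecond : x⁻¹ ^ 3 + x⁻¹ ^ 2 = x • x⁻¹ ^ 2 := by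
    rw [smul_eq_mul]
    field_simp
    linear_combination -hx
  rw [fibInducedMatrix_mulVec, smul_vec3]
  refine vec3_eq ?_ hsecond hsecond
  rw [smul_eq_mul]
  field_simp

lemma inv_pow_three_add_two_mul_inv_sq (hx : x ^ 2 = x + 1) : x⁻¹ ^ 3 + 2 * x⁻¹ ^ 2 = 1 := by
  have hx0 : x ≠ 0 := by rintro rfl; simp at hx
  field_simp
  linear_combination -(x + 1) * hx

end

lemma inv_goldenRatio_sq : φ⁻¹ ^ 2 = (3 - √5) / 2 := by
  rw [inv_goldenRatio, neg_sq, goldenConj_sq]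
  ring

lemma inv_goldenRatio_pow_three : φ⁻¹ ^ 3 = √5 - 2 := by
  rw [pow_succ, inv_goldenRatio_sq, inv_goldenRatio]
  linear_combination (-1 / 4 : ℝ) * sq_sqrt (show (0 : ℝ) ≤ 5 by norm_num)

end

/-- The induced substitution matrix M⁽²⁾ = [[0,0,1],[1,1,0],[1,1,0]]
on the legal length-2 words (LL, LS, SL) has a unique eigenvalue of maximal
modulus, namely φ = (1+√5)/2, and its eigenvector normalized to sum 1 is
(√5−2, (3−√5)/2, (3−√5)/2): the asymptotic frequencies of LL, LS, SL. -/
theorem fib_induced_matrix_perron_frobenius :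
    let φ : ℝ := (1 + Real.sqrt 5) / 2
    let M : Matrix (Fin 3) (Fin 3) ℝ := !![0, 0, 1; 1, 1, 0; 1, 1, 0]
    let Mc : Matrix (Fin 3) (Fin 3) ℂ := !![0, 0, 1; 1, 1, 0; 1, 1, 0]
    let v : Fin 3 → ℝ := ![Real.sqrt 5 - 2, (3 - Real.sqrt 5) / 2, (3 - Real.sqrt 5) / 2]
    (φ ∈ spectrum ℝ M) ∧
    (∀ μ ∈ spectrum ℂ Mc, μ ≠ (φ : ℂ) → ‖μ‖ < φ) ∧
    (M.mulVec v = φ • v) ∧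
    (v 0 + v 1 + v 2 = 1) := by
  intro φ M Mc v
  have hv : v = ![φ⁻¹ ^ 3, φ⁻¹ ^ 2, φ⁻¹ ^ 2] := by
    rw [inv_goldenRatio_pow_three, inv_goldenRatio_sq]
  refine ⟨goldenRatio_mem_spectrum_fibInducedMatrix,
    fun _ => norm_lt_goldenRatio_of_mem_spectrum_fibInducedMatrix, ?_, ?_⟩
  · rw [hv]
    exact fibInducedMatrix_mulVec_inv_pow goldenRatio_sq
  · simpa only [hv, cons_val, ← two_mul, add_assoc] using
      inv_pow_three_add_two_mul_inv_sq goldenRatio_sq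
end

section
/- Let p(n) denote the number of distinct factors of length n of the infinite Fibonacci word (the fixed point of the substitution 1 → 10, 0 → 1). Then p(n) = n + 1 for all n ≥ 1. -/
/-!
The Fibonacci word is the lower mechanical word of slope `α = φ⁻¹` and intercept `α`: its letter
`j` is `⌊(j + 2)α⌋ - ⌊(j + 1)α⌋`. Indeed, since `α² + α = 1`, the prefix of length `m` of that word
contains `⌊(m + 1)α⌋` ones, and a floor computation shows that the substitution maps it onto the
prefix of length `m + ⌊(m + 1)α⌋`; so the mechanical word is a fixed point of the substitution.

For any irrational slope `α ∈ (0, 1)`, the factor of length `n` at position `i` of a mechanical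
word depends only on which of the `n + 1` distinct points `{-jα}` (`0 ≤ j ≤ n`) lie below the
point `{x + iα}` of the circle. These points cut `[0, 1)` into `n + 1` intervals, each of which is
visited by the orbit `({x + iα})ᵢ` by Dirichlet's approximation theorem, so there are exactly
`n + 1` factors of length `n`.
-/

/-- The Fibonacci substitution σ(1) = 10, σ(0) = 1 on words over {0,1},
with 1 = `true` and 0 = `false`, extended to words by concatenation. -/
def fibSub (w : List Bool) : List Bool :=
  (w.map fun b => if b then [true, false] else [true]).flatten

/-- The infinite Fibonacci word, the fixed point of σ starting with 1:
its n-th letter stabilizes in σ^[n+1](1), whose length exceeds n. -/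
def fibWord (n : ℕ) : Bool := (fibSub^[n + 1] [true]).getD n true

open Set Filter Topology
open scoped goldenRatio

def factorsOfLength {A : Type*} (w : ℕ → A) (n : ℕ) : Set (List A) :=
  {l | ∃ i : ℕ, l = (List.range n).map fun j => w (i + j)}

theorem Int.floor_add_eq_ite {R : Type*} [CommRing R] [LinearOrder R] [IsStrictOrderedRing R]
    [FloorRing R] {x : R} (hx : x ∈ Ico 0 1) (t : R) :
    ⌊x + t⌋ = if Int.fract (-t) ≤ x then -⌊-t⌋ else -⌊-t⌋ - 1 := by
  have hsplit : x + t = (x - Int.fract (-t)) + ((-⌊-t⌋ : ℤ) : R) := by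
    rw [Int.fract]; push_cast; ring
  have h0 := Int.fract_nonneg (-t)
  have h1 := Int.fract_lt_one (-t)
  rw [hsplit, Int.floor_add_intCast]
  split_ifs with h
  · rw [Int.floor_eq_zero_iff.mpr ⟨by linarith, by linarith [hx.2]⟩, zero_add]
  · have : ⌊x - Int.fract (-t)⌋ = -1 := by
      rw [Int.floor_eq_iff]; push_cast; constructor <;> linarith [hx.1, not_le.mp h]
    rw [this]; ring

theorem Int.floor_add_eq_floor_add_iff {R : Type*} [CommRing R] [LinearOrder R]
    [IsStrictOrderedRing R] [FloorRing R] {x y : R} (hx : x ∈ Ico 0 1) (hy : y ∈ Ico 0 1)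
    (t : R) : ⌊x + t⌋ = ⌊y + t⌋ ↔ (Int.fract (-t) ≤ x ↔ Int.fract (-t) ≤ y) := by
  rw [Int.floor_add_eq_ite hx, Int.floor_add_eq_ite hy]
  split_ifs with hx' hy' hy' <;>
    simp only [hx', hy', iff_true, iff_false, not_true_eq_false] <;> omega

/-- The lower mechanical word of slope `α` and intercept `x`, with `true` for the letter `1`. -/
noncomputable def mechWord (α x : ℝ) (j : ℕ) : Bool := decide (⌊x + j * α⌋ < ⌊x + (j + 1) * α⌋)

theorem mechWord_add (α x : ℝ) (i j : ℕ) : mechWord α x (i + j) = mechWord α (x + i * α) j := by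
  have e : ∀ c : ℝ, x + ((i + j : ℕ) + c) * α = (x + i * α) + (j + c) * α := fun c => by
    push_cast; ring
  have e0 := e 0
  simp only [add_zero] at e0
  simp only [mechWord, e0, e 1]

theorem mechWord_fract (α x : ℝ) : mechWord α (Int.fract x) = mechWord α x := by
  funext j
  have h : ∀ s : ℝ, x + s = (Int.fract x + s) + ⌊x⌋ := fun s => by rw [Int.fract]; ring
  simp only [mechWord, h (_ * α), Int.floor_add_intCast, add_lt_add_iff_right]

/-- On `[0, 1)`, the function `x ↦ ⌊x + jα⌋` jumps exactly at `cutPoint α j = {-jα}`. -/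
noncomputable def cutPoint (α : ℝ) (j : ℕ) : ℝ := Int.fract (-(j * α))

theorem cutPoint_mem_Ico (α : ℝ) (j : ℕ) : cutPoint α j ∈ Ico 0 1 :=
  ⟨Int.fract_nonneg _, Int.fract_lt_one _⟩

section MechanicalWord

variable {α : ℝ}

theorem floor_add_succ_mul (h0 : 0 ≤ α) (h1 : α ≤ 1) (x : ℝ) (j : ℕ) :
    ⌊x + (j + 1) * α⌋ = ⌊x + j * α⌋ + if mechWord α x j then 1 else 0 := by
  have hle : ⌊x + j * α⌋ ≤ ⌊x + (j + 1) * α⌋ := Int.floor_mono (by nlinarith)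
  have hle' : ⌊x + (j + 1) * α⌋ ≤ ⌊x + j * α⌋ + 1 := by
    rw [← Int.floor_add_one]; exact Int.floor_mono (by nlinarith)
  rw [mechWord]
  split_ifs with h <;> simp only [decide_eq_true_eq] at h <;> omega

theorem forall_mechWord_eq_iff_forall_floor_eq (h0 : 0 ≤ α) (h1 : α ≤ 1) {x y : ℝ}
    (hxy : ⌊x⌋ = ⌊y⌋) (n : ℕ) :
    (∀ j < n, mechWord α x j = mechWord α y j) ↔ ∀ j ≤ n, ⌊x + j * α⌋ = ⌊y + j * α⌋ := by
  constructor
  · intro h j hj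
    induction j with
    | zero => simpa using hxy
    | succ j ih =>
      push_cast
      rw [floor_add_succ_mul h0 h1, floor_add_succ_mul h0 h1, ih (by omega), h j (by omega)]
  · intro h j hj
    have hsucc := h (j + 1) hj
    push_cast at hsucc
    simp only [mechWord, h j hj.le, hsucc]

theorem map_mechWord_eq_iff (h0 : 0 ≤ α) (h1 : α ≤ 1) {x y : ℝ} (hx : x ∈ Ico 0 1)
    (hy : y ∈ Ico 0 1) (n : ℕ) :
    (List.range n).map (mechWord α x) = (List.range n).map (mechWord α y) ↔
      ∀ j ≤ n, (cutPoint α j ≤ x ↔ cutPoint α j ≤ y) := by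
  have hxy : ⌊x⌋ = ⌊y⌋ := by rw [Int.floor_eq_zero_iff.mpr hx, Int.floor_eq_zero_iff.mpr hy]
  simp only [List.map_inj_left, List.mem_range, forall_mechWord_eq_iff_forall_floor_eq h0 h1 hxy,
    Int.floor_add_eq_floor_add_iff hx hy, cutPoint]

theorem map_mechWord_eq_of_cutPoint_le (h0 : 0 ≤ α) (h1 : α ≤ 1) {n j : ℕ} {y : ℝ}
    (hy : y ∈ Ico 0 1) (hjy : cutPoint α j ≤ y)
    (hmax : ∀ k ≤ n, cutPoint α k ≤ y → cutPoint α k ≤ cutPoint α j) :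
    (List.range n).map (mechWord α y) = (List.range n).map (mechWord α (cutPoint α j)) :=
  (map_mechWord_eq_iff h0 h1 hy (cutPoint_mem_Ico α j) n).mpr fun k hk =>
    ⟨hmax k hk, fun hkj => hkj.trans hjy⟩

theorem cutPoint_injective (hα : Irrational α) : Function.Injective (cutPoint α) := by
  intro j k h
  obtain ⟨z, hz⟩ := Int.fract_eq_fract.mp h
  by_contra hne
  have hz' : ((k - j : ℤ) : ℝ) * α = z := by push_cast; linarith
  exact (hα.intCast_mul (sub_ne_zero.mpr (by exact_mod_cast Ne.symm hne))).ne_int z hz'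

theorem exists_add_nat_mul_sub_intCast_mem_Ioo {δ a b : ℝ} (hδ : δ ≠ 0) (hδab : |δ| < b - a)
    (x : ℝ) : ∃ (m : ℕ) (z : ℤ), x + m * δ - z ∈ Ioo a b := by
  wlog hpos : 0 < δ generalizing δ x a b
  · obtain ⟨m, z, hm⟩ := this (neg_ne_zero.mpr hδ)
      (by rwa [abs_neg, sub_neg_eq_add, neg_add_eq_sub]) (-x)
      (neg_pos.mpr (lt_of_le_of_ne (not_lt.mp hpos) hδ))
    refine ⟨m, -z, ?_⟩
    rw [Int.cast_neg]
    constructor <;> linarith [hm.1, hm.2]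
  rw [abs_of_pos hpos] at hδab
  set z : ℤ := ⌊x - a⌋ + 1
  have hz : x < a + z := by
    have := Int.lt_floor_add_one (x - a); push_cast [z]; linarith
  set m : ℕ := ⌊(a + z - x) / δ⌋₊ + 1
  have hm : (m : ℝ) - 1 ≤ (a + z - x) / δ ∧ (a + z - x) / δ < m := by
    push_cast [m]
    exact ⟨by simpa using Nat.floor_le (div_nonneg (by linarith) hpos.le),
      Nat.lt_floor_add_one _⟩
  rw [le_div_iff₀ hpos, div_lt_iff₀ hpos] at hm
  exact ⟨m, z, by constructor <;> nlinarith [hm.1, hm.2]⟩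

theorem Irrational.exists_fract_add_nat_mul_mem_Ioo (hα : Irrational α) (x : ℝ) {a b : ℝ}
    (ha : 0 ≤ a) (hab : a < b) (hb : b ≤ 1) : ∃ i : ℕ, Int.fract (x + i * α) ∈ Ioo a b := by
  -- Dirichlet: some `kα` is within `δ ≠ 0`, `|δ| < b - a`, of an integer; then walk in steps `δ`.
  obtain ⟨N, hN⟩ := exists_nat_one_div_lt (sub_pos.mpr hab)
  obtain ⟨k, hk0, -, hk⟩ := Real.exists_nat_abs_mul_sub_round_le α N.succ_pos
  set δ := k * α - round (k * α)
  have hδ : δ ≠ 0 := sub_ne_zero.mpr ((hα.natCast_mul hk0.ne').ne_int _)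
  have hδab : |δ| < b - a := by
    refine hk.trans_lt (lt_of_le_of_lt ?_ hN)
    gcongr; linarith
  obtain ⟨m, z, hmz⟩ := exists_add_nat_mul_sub_intCast_mem_Ioo hδ hδab x
  refine ⟨m * k, ?_⟩
  have hsplit : x + ((m * k : ℕ) : ℝ) * α =
      (x + m * δ - z) + ((z + m * round (k * α) : ℤ) : ℝ) := by
    push_cast [δ]; ring
  rw [hsplit, Int.fract_add_intCast,
    Int.fract_eq_self.mpr ⟨by linarith [hmz.1], by linarith [hmz.2]⟩]
  exact hmz

theorem exists_cutPoint_map_mechWord_eq (h0 : 0 ≤ α) (h1 : α ≤ 1) {y : ℝ} (hy : y ∈ Ico 0 1)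
    (n : ℕ) : ∃ j ≤ n,
      (List.range n).map (mechWord α y) = (List.range n).map (mechWord α (cutPoint α j)) := by
  obtain ⟨j, hj, hjmax⟩ := ((Finset.range (n + 1)).filter (cutPoint α · ≤ y)).exists_max_image
    (cutPoint α) ⟨0, Finset.mem_filter.mpr
      ⟨Finset.mem_range.mpr n.succ_pos, by simpa [cutPoint] using hy.1⟩⟩
  rw [Finset.mem_filter, Finset.mem_range] at hj
  refine ⟨j, by omega, map_mechWord_eq_of_cutPoint_le h0 h1 hy hj.2 fun k hk hky => ?_⟩
  exact hjmax k (Finset.mem_filter.mpr ⟨Finset.mem_range.mpr (by omega), hky⟩)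

theorem Irrational.exists_map_mechWord_fract_eq (hα : Irrational α) (h0 : 0 ≤ α) (h1 : α ≤ 1)
    (x : ℝ) (n j : ℕ) : ∃ i : ℕ,
      (List.range n).map (mechWord α (Int.fract (x + i * α))) =
        (List.range n).map (mechWord α (cutPoint α j)) := by
  set c := cutPoint α j
  have hev : ∀ᶠ y in 𝓝[>] c, ∀ k ∈ Finset.range (n + 1), cutPoint α k ≤ y → cutPoint α k ≤ c := by
    refine (Finset.eventually_all _).2 fun k _ => ?_
    rcases le_or_gt (cutPoint α k) c with hk | hk
    · exact Eventually.of_forall fun _ _ => hk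
    · filter_upwards [nhdsWithin_le_nhds (eventually_lt_nhds hk)] with y hy hky
      exact absurd hky (not_le.mpr hy)
  obtain ⟨u, hcu, hu⟩ := mem_nhdsGT_iff_exists_Ioo_subset.mp hev
  obtain ⟨i, hi⟩ := hα.exists_fract_add_nat_mul_mem_Ioo x (cutPoint_mem_Ico α j).1
    (lt_min hcu (cutPoint_mem_Ico α j).2) (min_le_right _ _)
  refine ⟨i, map_mechWord_eq_of_cutPoint_le h0 h1 ⟨Int.fract_nonneg _, Int.fract_lt_one _⟩
    hi.1.le fun k hk => ?_⟩
  exact hu ⟨hi.1, hi.2.trans_le (min_le_left _ _)⟩ k (Finset.mem_range.mpr (by omega))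

theorem injOn_map_mechWord_cutPoint (hα : Irrational α) (h0 : 0 ≤ α) (h1 : α ≤ 1) (n : ℕ) :
    InjOn (fun j => (List.range n).map (mechWord α (cutPoint α j))) (Iic n) := by
  intro j hj k hk h
  have hiff := (map_mechWord_eq_iff h0 h1 (cutPoint_mem_Ico α j) (cutPoint_mem_Ico α k) n).mp h
  exact cutPoint_injective hα <|
    le_antisymm ((hiff j hj).mp le_rfl) ((hiff k hk).mpr le_rfl)

theorem ncard_factorsOfLength_mechWord (hα : Irrational α) (h0 : 0 ≤ α) (h1 : α ≤ 1) (x : ℝ)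
    (n : ℕ) : (factorsOfLength (mechWord α x) n).ncard = n + 1 := by
  have hfactor : ∀ i : ℕ, ((List.range n).map fun j => mechWord α x (i + j)) =
      (List.range n).map (mechWord α (Int.fract (x + i * α))) := fun i => by
    simp only [mechWord_add, mechWord_fract]
  have himage : factorsOfLength (mechWord α x) n =
      (fun j => (List.range n).map (mechWord α (cutPoint α j))) '' Iic n := by
    ext l
    constructor
    · rintro ⟨i, rfl⟩
      obtain ⟨j, hj, h⟩ :=
        exists_cutPoint_map_mechWord_eq h0 h1 ⟨Int.fract_nonneg (x + i * α), Int.fract_lt_one _⟩ n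
      exact ⟨j, hj, by rw [hfactor, h]⟩
    · rintro ⟨j, -, rfl⟩
      obtain ⟨i, hi⟩ := hα.exists_map_mechWord_fract_eq h0 h1 x n j
      exact ⟨i, by rw [hfactor, hi]⟩
  rw [himage, (injOn_map_mechWord_cutPoint hα h0 h1 n).ncard_image, ncard_Iic_nat]

end MechanicalWord

theorem fibSub_append (u v : List Bool) : fibSub (u ++ v) = fibSub u ++ fibSub v := by
  simp [fibSub]

theorem length_fibSub (u : List Bool) : (fibSub u).length = u.length + u.count true := by
  induction u with
  | nil => rfl
  | cons b u ih =>
    rw [← List.singleton_append, fibSub_append, List.length_append, ih]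
    cases b <;> simp +arith [fibSub]

theorem fibWord_eq_of_fibSub_map_range {w : ℕ → Bool} (hw0 : w 0 = true)
    (hfix : ∀ m, ∃ m', fibSub ((List.range m).map w) = (List.range m').map w) : fibWord = w := by
  have hiter : ∀ k, ∃ L, k < L ∧ fibSub^[k] [true] = (List.range L).map w := by
    intro k
    induction k with
    | zero => exact ⟨1, one_pos, by simp [hw0]⟩
    | succ k ih =>
      obtain ⟨L, hkL, hL⟩ := ih
      obtain ⟨L', hL'⟩ := hfix L
      have hcount : 0 < ((List.range L).map w).count true :=
        List.count_pos_iff.mpr (List.mem_map.mpr ⟨0, List.mem_range.mpr (by omega), hw0⟩)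
      have hlen := congrArg List.length hL'
      rw [length_fibSub, List.length_map, List.length_map, List.length_range,
        List.length_range] at hlen
      exact ⟨L', by omega, by rw [Function.iterate_succ_apply', hL, hL']⟩
  funext n
  obtain ⟨L, hL, h⟩ := hiter (n + 1)
  rw [fibWord, h, List.getD_eq_getElem _ _ (by rw [List.length_map, List.length_range]; omega)]
  simp only [List.getElem_map, List.getElem_range]

theorem inv_goldenRatio_sq_add_self : φ⁻¹ ^ 2 + φ⁻¹ = 1 := by
  rw [Real.inv_goldenRatio, neg_sq, Real.goldenConj_sq]; ring

theorem inv_goldenRatio_pos : 0 < φ⁻¹ := inv_pos.mpr Real.goldenRatio_pos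

theorem inv_goldenRatio_lt_one : φ⁻¹ < 1 := inv_lt_one_of_one_lt₀ Real.one_lt_goldenRatio

theorem irrational_inv_goldenRatio : Irrational φ⁻¹ := Real.goldenRatio_irrational.inv

-- From `α² + α = 1`. For `a = ⌊(m + 1)α⌋` the bracket is `k - 1 - {(m + 1)α}`, which pins down
-- `⌊(m + a + k)α⌋` for `k = 1, 2, 3`.
theorem natCast_add_mul_inv_goldenRatio (m a k : ℕ) :
    ((m + a + k : ℕ) : ℝ) * φ⁻¹ = m + 1 + (k - 1 - ((m + 1) * φ⁻¹ - a)) * φ⁻¹ := by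
  push_cast
  linear_combination ((m : ℝ) + 1) * inv_goldenRatio_sq_add_self

section FloorMulInvGoldenRatio

variable {m a : ℕ}

theorem natCast_mul_inv_goldenRatio_sub_floor_mem_Ioo (ha : ⌊((m + 1 : ℕ) : ℝ) * φ⁻¹⌋₊ = a) :
    ((m + 1 : ℕ) : ℝ) * φ⁻¹ - a ∈ Ioo 0 1 := by
  have h0 : 0 ≤ ((m + 1 : ℕ) : ℝ) * φ⁻¹ := by have := inv_goldenRatio_pos; positivity
  have hne := (irrational_inv_goldenRatio.natCast_mul (m := m + 1) (by omega)).ne_nat a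
  have := (Nat.floor_eq_iff h0).mp ha
  exact ⟨sub_pos.mpr (lt_of_le_of_ne this.1 hne.symm), by linarith⟩

theorem floor_natCast_add_one_mul_inv_goldenRatio (ha : ⌊((m + 1 : ℕ) : ℝ) * φ⁻¹⌋₊ = a) :
    ⌊((m + a + 1 : ℕ) : ℝ) * φ⁻¹⌋₊ = m := by
  obtain ⟨hf0, hf1⟩ := natCast_mul_inv_goldenRatio_sub_floor_mem_Ioo ha
  have := inv_goldenRatio_pos
  have := inv_goldenRatio_lt_one
  rw [Nat.floor_eq_iff (by positivity), natCast_add_mul_inv_goldenRatio]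
  push_cast at hf0 hf1 ⊢
  constructor <;> nlinarith

theorem floor_natCast_add_two_mul_inv_goldenRatio (ha : ⌊((m + 1 : ℕ) : ℝ) * φ⁻¹⌋₊ = a) :
    ⌊((m + a + 2 : ℕ) : ℝ) * φ⁻¹⌋₊ = m + 1 := by
  obtain ⟨hf0, hf1⟩ := natCast_mul_inv_goldenRatio_sub_floor_mem_Ioo ha
  have := inv_goldenRatio_pos
  have := inv_goldenRatio_lt_one
  rw [Nat.floor_eq_iff (by positivity), natCast_add_mul_inv_goldenRatio]
  push_cast at hf0 hf1 ⊢
  constructor <;> nlinarith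

theorem floor_natCast_add_three_mul_inv_goldenRatio (ha : ⌊((m + 1 : ℕ) : ℝ) * φ⁻¹⌋₊ = a)
    (hb : ⌊((m + 2 : ℕ) : ℝ) * φ⁻¹⌋₊ = a + 1) :
    ⌊((m + a + 3 : ℕ) : ℝ) * φ⁻¹⌋₊ = m + 1 := by
  obtain ⟨hf0, hf1⟩ := natCast_mul_inv_goldenRatio_sub_floor_mem_Ioo ha
  have := inv_goldenRatio_pos
  have := inv_goldenRatio_sq_add_self
  have hne := (irrational_inv_goldenRatio.natCast_mul (m := m + 2) (by omega)).ne_nat (a + 1)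
  have hb' := ((Nat.floor_eq_iff (by positivity)).mp hb).1
  push_cast at hne hb' hf0 hf1
  have hgt : 1 - φ⁻¹ < ((m : ℝ) + 1) * φ⁻¹ - a := by
    refine lt_of_le_of_ne (by linarith) fun h => hne ?_
    linarith
  rw [Nat.floor_eq_iff (by positivity), natCast_add_mul_inv_goldenRatio]
  push_cast at hf0 hf1 ⊢
  constructor <;> nlinarith

end FloorMulInvGoldenRatio

theorem mechWord_inv_goldenRatio (j : ℕ) : mechWord φ⁻¹ φ⁻¹ j =
    decide (⌊((j + 1 : ℕ) : ℝ) * φ⁻¹⌋₊ < ⌊((j + 2 : ℕ) : ℝ) * φ⁻¹⌋₊) := by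
  have := inv_goldenRatio_pos
  have e1 : φ⁻¹ + j * φ⁻¹ = ((j + 1 : ℕ) : ℝ) * φ⁻¹ := by push_cast; ring
  have e2 : φ⁻¹ + (j + 1) * φ⁻¹ = ((j + 2 : ℕ) : ℝ) * φ⁻¹ := by push_cast; ring
  have h1 := Int.natCast_floor_eq_floor (a := ((j + 1 : ℕ) : ℝ) * φ⁻¹) (by positivity)
  have h2 := Int.natCast_floor_eq_floor (a := ((j + 2 : ℕ) : ℝ) * φ⁻¹) (by positivity)
  simp only [mechWord, e1, e2, ← h1, ← h2, Nat.cast_lt]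

theorem floor_natCast_add_two_mul_inv_goldenRatio_eq (m : ℕ) :
    ⌊((m + 2 : ℕ) : ℝ) * φ⁻¹⌋₊ =
      ⌊((m + 1 : ℕ) : ℝ) * φ⁻¹⌋₊ + if mechWord φ⁻¹ φ⁻¹ m then 1 else 0 := by
  have := inv_goldenRatio_pos
  have := inv_goldenRatio_lt_one
  have hle : ⌊((m + 1 : ℕ) : ℝ) * φ⁻¹⌋₊ ≤ ⌊((m + 2 : ℕ) : ℝ) * φ⁻¹⌋₊ :=
    Nat.floor_mono (by push_cast; nlinarith)
  have hle' : ⌊((m + 2 : ℕ) : ℝ) * φ⁻¹⌋₊ ≤ ⌊((m + 1 : ℕ) : ℝ) * φ⁻¹⌋₊ + 1 := by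
    rw [← Nat.floor_add_one (by positivity)]
    exact Nat.floor_mono (by push_cast; nlinarith)
  rw [mechWord_inv_goldenRatio]
  split_ifs with h <;> simp only [decide_eq_true_eq] at h <;> omega

theorem mechWord_inv_goldenRatio_add_floor (m : ℕ) :
    mechWord φ⁻¹ φ⁻¹ (m + ⌊((m + 1 : ℕ) : ℝ) * φ⁻¹⌋₊) = true := by
  rw [mechWord_inv_goldenRatio, floor_natCast_add_one_mul_inv_goldenRatio rfl,
    floor_natCast_add_two_mul_inv_goldenRatio rfl]
  exact decide_eq_true (Nat.lt_succ_self m)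

theorem fibSub_map_range_mechWord_inv_goldenRatio (m : ℕ) :
    fibSub ((List.range m).map (mechWord φ⁻¹ φ⁻¹)) =
      (List.range (m + ⌊((m + 1 : ℕ) : ℝ) * φ⁻¹⌋₊)).map (mechWord φ⁻¹ φ⁻¹) := by
  induction m with
  | zero => rw [Nat.floor_eq_zero.mpr (by simpa using inv_goldenRatio_lt_one)]; rfl
  | succ m ih =>
    set a := ⌊((m + 1 : ℕ) : ℝ) * φ⁻¹⌋₊ with ha
    have hfirst : mechWord φ⁻¹ φ⁻¹ (m + a) = true := mechWord_inv_goldenRatio_add_floor m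
    have hnext := floor_natCast_add_two_mul_inv_goldenRatio_eq m
    rw [← ha] at hnext
    rw [List.range_succ, List.map_append, fibSub_append, ih, show m + 1 + 1 = m + 2 from rfl]
    cases hm : mechWord φ⁻¹ φ⁻¹ m
    · rw [hnext, hm, if_neg Bool.false_ne_true, show m + 1 + (a + 0) = m + a + 1 by omega,
        List.range_succ, List.map_append]
      simp only [List.map_cons, List.map_nil, hm, hfirst]
      rfl
    · rw [hm, if_pos rfl] at hnext
      have hsecond : mechWord φ⁻¹ φ⁻¹ (m + a + 1) = false := by
        rw [mechWord_inv_goldenRatio, floor_natCast_add_two_mul_inv_goldenRatio ha.symm,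
          floor_natCast_add_three_mul_inv_goldenRatio ha.symm hnext]
        exact decide_eq_false (lt_irrefl _)
      rw [hnext, show m + 1 + (a + 1) = m + a + 1 + 1 by omega, List.range_succ, List.range_succ,
        List.map_append, List.map_append, List.append_assoc]
      simp only [List.map_cons, List.map_nil, hm, hfirst, hsecond]
      rfl

theorem fibWord_eq_mechWord : fibWord = mechWord φ⁻¹ φ⁻¹ := by
  refine fibWord_eq_of_fibSub_map_range ?_
    fun m => ⟨_, fibSub_map_range_mechWord_inv_goldenRatio m⟩
  have h := mechWord_inv_goldenRatio_add_floor 0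
  rwa [Nat.floor_eq_zero.mpr (by simpa using inv_goldenRatio_lt_one)] at h

theorem fibWord_complexity_general (n : ℕ) :
    Set.ncard {l : List Bool |
      ∃ i : ℕ, l = (List.range n).map fun j => fibWord (i + j)} = n + 1 := by
  change (factorsOfLength fibWord n).ncard = n + 1
  rw [fibWord_eq_mechWord]
  exact ncard_factorsOfLength_mechWord irrational_inv_goldenRatio inv_goldenRatio_pos.le
    inv_goldenRatio_lt_one.le φ⁻¹ n

/-- The complexity function of the infinite Fibonacci word
satisfies p(n) = n + 1 for all n ≥ 1. -/
theorem fibWord_complexity (n : ℕ) (hn : 1 ≤ n) :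
    Set.ncard {l : List Bool |
      ∃ i : ℕ, l = (List.range n).map fun j => fibWord (i + j)} = n + 1 :=
  fibWord_complexity_general n
end
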